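/- arXiv:1610.05277 — 7 statements merged into one kernel-verified Lean document; each statement's English description precedes it below -/
import Mathlib

section
/- The map π: ℂP³ → S⁴ ⊂ ℝ⁵ given by π([z₁,z₂,z₃,z₄]) = (2(z̄₁z₃+z₂z̄₄), 2(z̄₁z₄−z₂z̄₃), |z₁|²+|z₂|²−|z₃|²−|z₄|²)/(|z₁|²+|z₂|²+|z₃|²+|z₄|²) is well defined (independent of the choice of homogeneous coordinates) and its image lies in the unit sphere S⁴ ⊂ ℝ⁵ ≅ ℂ×ℂ×ℝ. -/
open Complex ComplexConjugate

/-!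
Each coordinate of `twistorPi` is a sesquilinear form in `z` divided by the Hermitian form
`N = Σ |zᵢ|²`, so scaling `z` by `c` multiplies numerator and denominator by `|c|²`.
With `P = |z₀|² + |z₁|²` and `Q = |z₂|² + |z₃|²`, the two complex coordinates are (twice)
the quaternion product `q̄₁ q₂` of `q₁ = z₀ + z₁ j`, `q₂ = z₂ + z₃ j`, so their squared norms
add up to `4PQ`, and `4PQ + (P - Q)² = (P + Q)²` puts the image on the unit sphere.
-/

/-- The twistor projection `π : ℂP³ → ℝ⁵ ≅ ℂ × ℂ × ℝ`, written on homogeneous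
coordinates, i.e. on nonzero vectors of `ℂ⁴`. -/
noncomputable def twistorPi (z : Fin 4 → ℂ) : ℂ × ℂ × ℝ :=
  let N : ℝ := ‖z 0‖ ^ 2 + ‖z 1‖ ^ 2 +
    ‖z 2‖ ^ 2 + ‖z 3‖ ^ 2
  ((2 * ((starRingEnd ℂ) (z 0) * z 2 + z 1 * (starRingEnd ℂ) (z 3))) / (N : ℂ),
   (2 * ((starRingEnd ℂ) (z 0) * z 3 - z 1 * (starRingEnd ℂ) (z 2))) / (N : ℂ),
   (‖z 0‖ ^ 2 + ‖z 1‖ ^ 2 -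
     ‖z 2‖ ^ 2 - ‖z 3‖ ^ 2) / N)

theorem normSq_conj_mul_add_add_normSq_conj_mul_sub (a b c d : ℂ) :
    normSq (conj a * c + b * conj d) + normSq (conj a * d - b * conj c) =
      (normSq a + normSq b) * (normSq c + normSq d) := by
  simp only [normSq_apply, mul_re, mul_im, add_re, add_im, sub_re, sub_im, conj_re, conj_im]
  ring

theorem sum_sq_norm_fin_four_pos {z : Fin 4 → ℂ} (hz : z ≠ 0) :
    0 < ‖z 0‖ ^ 2 + ‖z 1‖ ^ 2 + ‖z 2‖ ^ 2 + ‖z 3‖ ^ 2 := by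
  obtain ⟨i, hi⟩ := Function.ne_iff.mp hz
  fin_cases i <;>
    simp only [Fin.zero_eta, Fin.mk_one, Fin.reduceFinMk, Pi.zero_apply, ne_eq] at hi <;>
    positivity

theorem twistorPi_smul (z : Fin 4 → ℂ) {c : ℂ} (hc : c ≠ 0) :
    twistorPi (c • z) = twistorPi z := by
  have hs : ‖c‖ ^ 2 ≠ 0 := by positivity
  have hs' : (‖c‖ : ℂ) ^ 2 ≠ 0 := by exact_mod_cast hs
  have conj_mul_mul (x y : ℂ) : conj (c * x) * (c * y) = (‖c‖ : ℂ) ^ 2 * (conj x * y) := by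
    rw [map_mul, ← conj_mul']; ring
  have mul_conj_mul (x y : ℂ) : c * x * conj (c * y) = (‖c‖ : ℂ) ^ 2 * (x * conj y) := by
    rw [map_mul, ← mul_conj']; ring
  simp only [twistorPi, Pi.smul_apply, smul_eq_mul, conj_mul_mul, mul_conj_mul, norm_mul, mul_pow,
    ← mul_add, ← mul_sub, ofReal_mul, ofReal_pow, mul_left_comm (2 : ℂ), mul_div_mul_left _ _ hs,
    mul_div_mul_left _ _ hs']

theorem twistorPi_mem_sphere {z : Fin 4 → ℂ} (hz : z ≠ 0) :
    ‖(twistorPi z).1‖ ^ 2 + ‖(twistorPi z).2.1‖ ^ 2 + (twistorPi z).2.2 ^ 2 = 1 := by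
  have hN := sum_sq_norm_fin_four_pos hz
  have hopf := normSq_conj_mul_add_add_normSq_conj_mul_sub (z 0) (z 1) (z 2) (z 3)
  simp only [← Complex.sq_norm] at hopf
  simp only [twistorPi, norm_div, norm_mul, norm_real, Real.norm_of_nonneg hN.le, RCLike.norm_ofNat]
  field_simp
  linear_combination 4 * hopf

/-- The twistor projection is well defined on `ℂP³` (independent of the choice of
homogeneous coordinates) and its image lies in the unit sphere of `ℝ⁵ ≅ ℂ × ℂ × ℝ`. -/
theorem twistorPi_wellDefined_and_mem_sphere (z : Fin 4 → ℂ) (hz : z ≠ 0) :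
    (∀ c : ℂ, c ≠ 0 → twistorPi (c • z) = twistorPi z) ∧
    ‖(twistorPi z).1‖ ^ 2 + ‖(twistorPi z).2.1‖ ^ 2 +
      (twistorPi z).2.2 ^ 2 = 1 :=
  ⟨fun _ hc => twistorPi_smul z hc, twistorPi_mem_sphere hz⟩
end

section
/- If the 4×4 complex matrix A satisfies AᵗJA = J (with J as below) and A fixes the vector (1,0,0,0)ᵗ, and additionally A is unitary, then A has the form with first two columns (1,0,0,0)ᵗ, (0,1,0,0)ᵗ and bottom-right 2×2 block [[v₁,−conj(v₂)],[v₂,conj(v₁)]] with |v₁|²+|v₂|²=1, and zeros elsewhere below the first row. -/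
open Complex Matrix

/-- The matrix `J`, block diagonal with blocks `[[0,-1],[1,0]]`. -/
def Jmat : Matrix (Fin 4) (Fin 4) ℂ :=
  !![0, -1, 0, 0; 1, 0, 0, 0; 0, 0, 0, -1; 0, 0, 1, 0]

/-!
Fixing `e₀` makes the first column `e₀`; unitarity turns it into the first row as well.
Reading row `0` of `AᵀJA = J` then gives `(JA)₀ = J₀`, i.e. the second row of `A` is `e₁`,
and unitarity again makes the second column `e₁`. So `A = 1 ⊕ 1 ⊕ B` with `B` unitary and,
by entry `(2,3)` of `AᵀJA = J`, of determinant `1`; such a `B` is `[[v₁,−v̄₂],[v₂,v̄₁]]`.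
-/

namespace Matrix

variable {n α : Type*} [Fintype n] [DecidableEq n] [CommRing α] [StarRing α]
  {A : Matrix n n α} {i : n}

theorem row_eq_single_of_col_eq_single (hA : A ∈ unitaryGroup n α)
    (h : A.col i = Pi.single i 1) : A.row i = Pi.single i 1 := by
  have hstar : star A *ᵥ Pi.single i 1 = Pi.single i 1 :=
    calc star A *ᵥ Pi.single i 1 = star A *ᵥ (A *ᵥ Pi.single i 1) := by rw [mulVec_single_one A, h]
      _ = Pi.single i 1 := by rw [mulVec_mulVec, mem_unitaryGroup_iff'.mp hA, one_mulVec]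
  funext j
  simpa [Pi.single_apply, eq_comm, apply_ite star] using congr_arg star (congr_fun hstar j)

theorem col_eq_single_of_row_eq_single (hA : A ∈ unitaryGroup n α)
    (h : A.row i = Pi.single i 1) : A.col i = Pi.single i 1 := by
  have hstar : Pi.single i 1 ᵥ* star A = Pi.single i 1 :=
    calc Pi.single i 1 ᵥ* star A = (Pi.single i 1 ᵥ* A) ᵥ* star A := by rw [single_one_vecMul i A, h]
      _ = Pi.single i 1 := by rw [vecMul_vecMul, mem_unitaryGroup_iff.mp hA, vecMul_one]
  funext j
  simpa [Pi.single_apply, eq_comm, apply_ite star] using congr_arg star (congr_fun hstar j)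

theorem row_mul_eq_row_of_transpose_mul_mul_eq {R : Type*} [CommSemiring R]
    {A J : Matrix n n R} (hsymp : Aᵀ * J * A = J) (h : A.col i = Pi.single i 1) :
    (J * A).row i = J.row i :=
  calc (J * A).row i = (A *ᵥ Pi.single i 1) ᵥ* (J * A) := by rw [mulVec_single_one, h, single_one_vecMul]
    _ = J.row i := by rw [vecMul_mulVec, ← Matrix.mul_assoc, hsymp, single_one_vecMul]

end Matrix

theorem second_col_eq_of_det_eq_one {R : Type*} [CommRing R] {a b c d a' b' : R}
    (hnorm : a' * a + b' * b = 1) (horth : a' * c + b' * d = 0) (hdet : a * d - b * c = 1) :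
    c = -b' ∧ d = a' :=
  ⟨by linear_combination -c * hnorm + a * horth - b' * hdet,
   by linear_combination -d * hnorm + b * horth + a' * hdet⟩

theorem Jmat_row_zero : Jmat.row 0 = -Pi.single 1 1 := by
  ext j; fin_cases j <;> simp [Jmat]

theorem Jmat_mul_row_zero (A : Matrix (Fin 4) (Fin 4) ℂ) : (Jmat * A).row 0 = -A.row 1 := by
  ext j; simp [Jmat, vecMul, dotProduct, Fin.sum_univ_four]

theorem row_one_eq_single_of_symplectic {A : Matrix (Fin 4) (Fin 4) ℂ}
    (hsymp : Aᵀ * Jmat * A = Jmat) (h : A.col 0 = Pi.single 0 1) : A.row 1 = Pi.single 1 1 := by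
  simpa [Jmat_row_zero, Jmat_mul_row_zero] using row_mul_eq_row_of_transpose_mul_mul_eq hsymp h

theorem lowerRight_det_eq_one_of_symplectic {A : Matrix (Fin 4) (Fin 4) ℂ}
    (hsymp : Aᵀ * Jmat * A = Jmat) (h02 : A 0 2 = 0) (h12 : A 1 2 = 0) :
    A 2 2 * A 3 3 - A 3 2 * A 2 3 = 1 := by
  have h := congr_fun (congr_fun hsymp 2) 3
  simp only [Jmat, mul_apply, transpose_apply, of_apply, cons_val', cons_val_fin_one,
    Fin.sum_univ_four, h02, h12, cons_val_zero, cons_val_one, cons_val, zero_mul, mul_zero,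
    add_zero, zero_add, mul_one, mul_neg, neg_mul] at h
  linear_combination -h

/-- A unitary matrix `A` with `AᵗJA = J` fixing `(1,0,0,0)ᵗ` has first two columns
`(1,0,0,0)ᵗ, (0,1,0,0)ᵗ`, bottom-right `2×2` block `[[v₁,−v̄₂],[v₂,v̄₁]]` with
`|v₁|² + |v₂|² = 1`, and zeros elsewhere below the first row. -/
theorem sp2_stabilizer_form (A : Matrix (Fin 4) (Fin 4) ℂ)
    (hsymp : Aᵀ * Jmat * A = Jmat)
    (hfix : A.mulVec (fun i => if i = 0 then 1 else 0) = fun i => if i = 0 then 1 else 0)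
    (hunit : A ∈ Matrix.unitaryGroup (Fin 4) ℂ) :
    ∃ v₁ v₂ : ℂ, ‖v₁‖ ^ 2 + ‖v₂‖ ^ 2 = 1 ∧
      A 0 0 = 1 ∧ A 1 0 = 0 ∧ A 2 0 = 0 ∧ A 3 0 = 0 ∧
      A 0 1 = 0 ∧ A 1 1 = 1 ∧ A 2 1 = 0 ∧ A 3 1 = 0 ∧
      A 1 2 = 0 ∧ A 1 3 = 0 ∧
      A 2 2 = v₁ ∧ A 2 3 = -(starRingEnd ℂ) v₂ ∧
      A 3 2 = v₂ ∧ A 3 3 = (starRingEnd ℂ) v₁ := by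
  have hcol0 : A.col 0 = Pi.single 0 1 := by
    rw [← mulVec_single_one]; simpa [← Pi.single_apply] using hfix
  have hrow0 := row_eq_single_of_col_eq_single hunit hcol0
  have hrow1 := row_one_eq_single_of_symplectic hsymp hcol0
  have hcol1 := col_eq_single_of_row_eq_single hunit hrow1
  simp only [funext_iff, col_apply, row_apply, Pi.single_apply, Fin.forall_fin_succ,
    Fin.succ_zero_eq_one, Fin.succ_one_eq_two, Fin.reduceSucc, Fin.reduceEq, IsEmpty.forall_iff,
    and_true, ↓reduceIte] at hcol0 hrow0 hrow1 hcol1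
  obtain ⟨h00, h10, h20, h30⟩ := hcol0
  obtain ⟨-, h01, h02, -⟩ := hrow0
  obtain ⟨-, h11, h12, h13⟩ := hrow1
  obtain ⟨-, -, h21, h31⟩ := hcol1
  have hU := mem_unitaryGroup_iff'.mp hunit
  have hnorm : starRingEnd ℂ (A 2 2) * A 2 2 + starRingEnd ℂ (A 3 2) * A 3 2 = 1 := by
    simpa [mul_apply, Fin.sum_univ_four, h02, h12] using congr_fun (congr_fun hU 2) 2
  have horth : starRingEnd ℂ (A 2 2) * A 2 3 + starRingEnd ℂ (A 3 2) * A 3 3 = 0 := by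
    simpa [mul_apply, Fin.sum_univ_four, h02, h12] using congr_fun (congr_fun hU 2) 3
  have hdet := lowerRight_det_eq_one_of_symplectic hsymp h02 h12
  obtain ⟨h23, h33⟩ := second_col_eq_of_det_eq_one hnorm horth hdet
  refine ⟨A 2 2, A 3 2, ?_, h00, h10, h20, h30, h01, h11, h21, h31, h12, h13, rfl, h23, rfl, h33⟩
  rw [conj_mul', conj_mul'] at hnorm
  exact_mod_cast hnorm
end

section
/- For real parameters η, q, μ with q = (η/√3)·√((η²+5)/(η²+4)) and μ = (2/√3)·√((η²+5)/(η²+4)), the curve Ψ⁵_η(z) = (1+qz, −qz⁴+z⁵, μz+ηz², ηz³−μz⁴) satisfies the horizontality condition f₁′f₂ − f₁f₂′ + f₃′f₄ − f₃f₄′ = 0 identically. -/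
open Polynomial

/-! Expanding, the horizontality form of `Ψ⁵` is
`(4q - 2μη) z³ + (3q² + 3μ² - η² - 5) z⁴ - (4q - 2μη) z⁵`, so it vanishes once
`μη = 2q` and `3(q² + μ²) = η² + 5`; the normalising factor `√((η²+5)/(η²+4))` in `q` and `μ`
is chosen to make the second relation hold. -/

section Horizontality

variable {R : Type*} [CommRing R]

noncomputable def horizontalityForm (f : Fin 4 → R[X]) : R[X] :=
  derivative (f 0) * f 1 - f 0 * derivative (f 1) +
    derivative (f 2) * f 3 - f 2 * derivative (f 3)

noncomputable def psi5 (q μ η : R) : Fin 4 → R[X] :=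
  ![1 + C q * X,
    -(C q * X ^ 4) + X ^ 5,
    C μ * X + C η * X ^ 2,
    C η * X ^ 3 - C μ * X ^ 4]

theorem horizontalityForm_psi5 (q μ η : R) :
    horizontalityForm (psi5 q μ η) =
      C (4 * q - 2 * μ * η) * (X ^ 3 - X ^ 5) +
        C (3 * q ^ 2 + 3 * μ ^ 2 - (η ^ 2 + 5)) * X ^ 4 := by
  simp only [horizontalityForm, psi5, Matrix.cons_val_zero, Matrix.cons_val_one,
    Matrix.cons_val_two, Matrix.cons_val_three, Matrix.head_cons, Matrix.tail_cons,
    derivative_neg, derivative_mul, derivative_C, derivative_X_pow, derivative_X,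
    derivative_one, map_sub, map_add, map_mul, map_pow, map_ofNat, map_natCast]
  push_cast
  ring

theorem horizontalityForm_psi5_eq_zero {q μ η : R} (h₁ : μ * η = 2 * q)
    (h₂ : 3 * q ^ 2 + 3 * μ ^ 2 = η ^ 2 + 5) : horizontalityForm (psi5 q μ η) = 0 := by
  rw [horizontalityForm_psi5, mul_assoc, h₁, h₂, show 4 * q - 2 * (2 * q) = 0 by ring, sub_self]
  simp only [C_0, zero_mul, add_zero]

end Horizontality

section Parameters

variable {η q μ : ℝ}

theorem psi5_mu_mul_eta (hq : q = η / √3 * √((η ^ 2 + 5) / (η ^ 2 + 4)))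
    (hμ : μ = 2 / √3 * √((η ^ 2 + 5) / (η ^ 2 + 4))) : μ * η = 2 * q := by
  rw [hq, hμ]
  ring

theorem psi5_sq_add_sq (hq : q = η / √3 * √((η ^ 2 + 5) / (η ^ 2 + 4)))
    (hμ : μ = 2 / √3 * √((η ^ 2 + 5) / (η ^ 2 + 4))) : 3 * q ^ 2 + 3 * μ ^ 2 = η ^ 2 + 5 := by
  have h3 : √3 ^ 2 = 3 := Real.sq_sqrt (by norm_num)
  have hs : √((η ^ 2 + 5) / (η ^ 2 + 4)) ^ 2 = (η ^ 2 + 5) / (η ^ 2 + 4) :=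
    Real.sq_sqrt (by positivity)
  have h4 : η ^ 2 + 4 ≠ 0 := by positivity
  calc 3 * q ^ 2 + 3 * μ ^ 2
      = 3 / √3 ^ 2 * (η ^ 2 + 4) * √((η ^ 2 + 5) / (η ^ 2 + 4)) ^ 2 := by
        rw [hq, hμ]; ring
    _ = η ^ 2 + 5 := by rw [h3, hs]; field_simp

end Parameters

/-- For `q = (η/√3)·√((η²+5)/(η²+4))` and `μ = (2/√3)·√((η²+5)/(η²+4))`, the curve
`Ψ⁵_η(z) = (1+qz, −qz⁴+z⁵, μz+ηz², ηz³−μz⁴)` satisfies the horizontality condition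
identically. -/
theorem Psi5_horizontal (η q μ : ℝ)
    (hq : q = η / Real.sqrt 3 * Real.sqrt ((η ^ 2 + 5) / (η ^ 2 + 4)))
    (hμ : μ = 2 / Real.sqrt 3 * Real.sqrt ((η ^ 2 + 5) / (η ^ 2 + 4))) :
    letI f : Fin 4 → Polynomial ℂ :=
      ![1 + C (q : ℂ) * X,
        -(C (q : ℂ) * X ^ 4) + X ^ 5,
        C (μ : ℂ) * X + C (η : ℂ) * X ^ 2,
        C (η : ℂ) * X ^ 3 - C (μ : ℂ) * X ^ 4]
    derivative (f 0) * f 1 - f 0 * derivative (f 1) +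
      derivative (f 2) * f 3 - f 2 * derivative (f 3) = 0 := by
  have h₁ : (μ : ℂ) * η = 2 * q := by exact_mod_cast psi5_mu_mul_eta hq hμ
  have h₂ : 3 * (q : ℂ) ^ 2 + 3 * (μ : ℂ) ^ 2 = (η : ℂ) ^ 2 + 5 := by
    exact_mod_cast psi5_sq_add_sq hq hμ
  exact horizontalityForm_psi5_eq_zero h₁ h₂
end

section
/- The real solutions (μ, q, η) of the system 2q − ημ = 0 and −3q² + 5 − 3μ² + η² = 0 are exactly μ = ±(2/√3)√((η²+5)/(η²+4)), q = ±(η/√3)√((η²+5)/(η²+4)) (with matching signs), for η ∈ ℝ. -/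
/-! The first equation says `q = ημ/2`; substituting it, the second becomes
`3(η² + 4)μ² = 4(η² + 5)`, which fixes `μ` up to sign. -/

lemma sq_div_sqrt_mul_sqrt {a b x : ℝ} (hb : 0 ≤ b) (hx : 0 ≤ x) :
    (a / √b * √x) ^ 2 = a ^ 2 * x / b := by
  rw [mul_pow, div_pow, Real.sq_sqrt hb, Real.sq_sqrt hx]
  ring

lemma horizontality_quadric_iff (μ η : ℝ) :
    -3 * (η * μ / 2) ^ 2 + 5 - 3 * μ ^ 2 + η ^ 2 = 0 ↔
      μ ^ 2 = 4 * (η ^ 2 + 5) / (3 * (η ^ 2 + 4)) := by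
  rw [eq_div_iff (by positivity)]
  constructor <;> intro h
  · linear_combination (-4) * h
  · linear_combination (-1 / 4) * h

lemma horizontality_system_iff {μ q η A : ℝ}
    (hA : A ^ 2 = 4 * (η ^ 2 + 5) / (3 * (η ^ 2 + 4))) :
    (2 * q - η * μ = 0 ∧ -3 * q ^ 2 + 5 - 3 * μ ^ 2 + η ^ 2 = 0) ↔
      (μ = A ∧ q = η * A / 2) ∨ (μ = -A ∧ q = -(η * A / 2)) := by
  have hq : 2 * q - η * μ = 0 ↔ q = η * μ / 2 := by
    constructor <;> intro h <;> linarith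
  calc _ ↔ q = η * μ / 2 ∧ μ ^ 2 = A ^ 2 := by
        rw [hq]
        exact and_congr_right fun hq_eq => by rw [hq_eq, horizontality_quadric_iff, hA]
    _ ↔ q = η * μ / 2 ∧ (μ = A ∨ μ = -A) := by rw [sq_eq_sq_iff_eq_or_eq_neg]
    _ ↔ _ := by
        constructor
        · rintro ⟨rfl, rfl | rfl⟩
          exacts [.inl ⟨rfl, rfl⟩, .inr ⟨rfl, by ring⟩]
        · rintro (⟨rfl, rfl⟩ | ⟨rfl, rfl⟩)
          exacts [⟨rfl, .inl rfl⟩, ⟨by ring, .inr rfl⟩]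

/-- The real solutions of the system `2q − ημ = 0`, `−3q² + 5 − 3μ² + η² = 0` are
exactly `μ = ±(2/√3)√((η²+5)/(η²+4))`, `q = ±(η/√3)√((η²+5)/(η²+4))` with matching
signs, for `η ∈ ℝ`. -/
theorem horizontality_system_solutions (μ q η : ℝ) :
    (2 * q - η * μ = 0 ∧ -3 * q ^ 2 + 5 - 3 * μ ^ 2 + η ^ 2 = 0) ↔
    ((μ = 2 / Real.sqrt 3 * Real.sqrt ((η ^ 2 + 5) / (η ^ 2 + 4)) ∧
        q = η / Real.sqrt 3 * Real.sqrt ((η ^ 2 + 5) / (η ^ 2 + 4))) ∨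
      (μ = -(2 / Real.sqrt 3 * Real.sqrt ((η ^ 2 + 5) / (η ^ 2 + 4))) ∧
        q = -(η / Real.sqrt 3 * Real.sqrt ((η ^ 2 + 5) / (η ^ 2 + 4))))) := by
  set s := √((η ^ 2 + 5) / (η ^ 2 + 4))
  have hA : (2 / √3 * s) ^ 2 = 4 * (η ^ 2 + 5) / (3 * (η ^ 2 + 4)) := by
    rw [sq_div_sqrt_mul_sqrt (by norm_num) (by positivity)]
    field_simp
    ring
  have hq : η / √3 * s = η * (2 / √3 * s) / 2 := by ring
  rw [hq]
  exact horizontality_system_iff hA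
end

section
/- For a linearly full horizontal holomorphic curve ψ: S² → ℂP³ of degree d, the total ramification indices satisfy 2r₀ + r₁ = 2d − 6, where rₖ = Σ_p rₖ(p) is the sum over all higher singularities of the k-th osculating ramification indices; in particular d ≥ 3 and a curve of degree 3 has no higher singularities. -/
open Polynomial Matrix

/-- The `2×2` Wronskian-type minors of `(f, f′)`. -/
noncomputable def wedge1 (f : Fin 4 → Polynomial ℂ) (i j : Fin 4) : Polynomial ℂ :=
  f i * derivative (f j) - f j * derivative (f i)

/-- The `3×3` minors of `(f, f′, f″)`: `wedge2 f l` is the determinant of the matrix of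
`r`-th derivatives (`r = 0,1,2`) of the components of `f` other than the `l`-th. -/
noncomputable def wedge2 (f : Fin 4 → Polynomial ℂ) (l : Fin 4) : Polynomial ℂ :=
  (Matrix.of fun (r c : Fin 3) =>
    (fun p => derivative p)^[(r : ℕ)] (f (l.succAbove c))).det

/-- Sum over all finite points of the vanishing order of `f ∧ f′`. -/
noncomputable def ord1Fin (f : Fin 4 → Polynomial ℂ) : ℕ :=
  (Finset.univ.gcd fun ij : Fin 4 × Fin 4 => wedge1 f ij.1 ij.2).natDegree

/-- Maximum degree of the components of `f ∧ f′`. -/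
noncomputable def maxDeg1 (f : Fin 4 → Polynomial ℂ) : ℕ :=
  Finset.univ.sup fun ij : Fin 4 × Fin 4 => (wedge1 f ij.1 ij.2).natDegree

/-- Sum over all finite points of the vanishing order of `f ∧ f′ ∧ f″`. -/
noncomputable def ord2Fin (f : Fin 4 → Polynomial ℂ) : ℕ :=
  (Finset.univ.gcd fun l : Fin 4 => wedge2 f l).natDegree

/-- Maximum degree of the components of `f ∧ f′ ∧ f″`. -/
noncomputable def maxDeg2 (f : Fin 4 → Polynomial ℂ) : ℕ :=
  Finset.univ.sup fun l : Fin 4 => (wedge2 f l).natDegree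

/-- Total ramification index `r₀ = Σ_p r₀(p)` of a degree-`d` curve in `ℂP³`, the
total vanishing order (including at `∞`, where `f ∧ f′` is a section of `O(2d−2)`)
of `f ∧ f′`. -/
noncomputable def r0 (f : Fin 4 → Polynomial ℂ) (d : ℕ) : ℤ :=
  (ord1Fin f : ℤ) + (2 * (d : ℤ) - 2 - (maxDeg1 f : ℤ))

/-- Total ramification index `r₁ = Σ_p r₁(p)` of the first osculating curve: the total
vanishing order of `f ∧ f′ ∧ f″` (a section of `O(3d−6)`) is `2r₀ + r₁`. -/
noncomputable def r1 (f : Fin 4 → Polynomial ℂ) (d : ℕ) : ℤ :=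
  ((ord2Fin f : ℤ) + (3 * (d : ℤ) - 6 - (maxDeg2 f : ℤ))) - 2 * r0 f d

/-!
Horizontality `ω(f', f) = 0` and its derivative `ω(f'', f) = 0` force every `3 × 3` minor of
`(f, f', f'')` to be `h · f_σ(l)`, with `h = ω(f', f'')` and `σ` the pairing of coordinates
by `ω`. As the `f_i` have no common zero, `f ∧ f' ∧ f''` vanishes exactly where `h` does, so
`2r₀ + r₁ = 2d − 6` is a degree count. For `0 ≤ r₀ ≤ d − 3`: the minors of `f ∧ f'` have
degree at most `2d − 2`, and `W(f_i ∧ f_j, f_i ∧ f_k) = f_i · W(f_i, f_j, f_k) = h f_i²` shows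
that the square of the gcd `g` of these minors divides `h`; comparing degrees in
`W(f_i ∧ f_j / g, f_i ∧ f_k / g) = (h / g²) f_i²` for some `f_i` of degree `d` gives a minor
of degree at least `d + deg g + 1`.
-/

namespace Polynomial

section CommRing

variable {R : Type*} [CommRing R]

/-- The Wronskian `det (a, b, c; a', b', c'; a'', b'', c'')`, expanded along its first row. -/
noncomputable def wronskian₃ (a b c : R[X]) : R[X] :=
  a * wronskian (derivative b) (derivative c) - b * wronskian (derivative a) (derivative c) +
    c * wronskian (derivative a) (derivative b)

theorem wronskian₃_rotate (a b c : R[X]) : wronskian₃ c a b = wronskian₃ a b c := by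
  simp only [wronskian₃, wronskian]
  ring

theorem wronskian_mul_mul_left (g a b : R[X]) :
    wronskian (g * a) (g * b) = g ^ 2 * wronskian a b := by
  simp only [wronskian, derivative_mul]
  ring

theorem wronskian_wronskian (a b c : R[X]) :
    wronskian (wronskian a b) (wronskian a c) = a * wronskian₃ a b c := by
  simp only [wronskian₃, wronskian, derivative_mul, derivative_sub]
  ring

theorem sq_dvd_wronskian {g a b : R[X]} (ha : g ∣ a) (hb : g ∣ b) : g ^ 2 ∣ wronskian a b := by
  obtain ⟨a, rfl⟩ := ha
  obtain ⟨b, rfl⟩ := hb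
  exact ⟨wronskian a b, wronskian_mul_mul_left g a b⟩

theorem natDegree_wronskian_le_add_sub_one (a b : R[X]) :
    (wronskian a b).natDegree ≤ a.natDegree + b.natDegree - 1 := by
  by_cases hw : wronskian a b = 0
  · simp [hw]
  · have := natDegree_wronskian_lt_add hw
    omega

end CommRing

section Field

variable {K : Type*} [Field K]

theorem natDegree_wronskian_le_of_natDegree_le {a b : K[X]} {n : ℕ} (ha : a.natDegree ≤ n)
    (hb : b.natDegree ≤ n) : (wronskian a b).natDegree ≤ 2 * n - 2 := by
  have hab := natDegree_wronskian_le_add_sub_one a b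
  by_cases hlt : a.natDegree + b.natDegree < 2 * n ∨ n = 0
  · omega
  obtain ⟨rfl, hbn, hn⟩ : a.natDegree = n ∧ b.natDegree = n ∧ n ≠ 0 := by omega
  have ha0 : a ≠ 0 := by rintro rfl; simp at hn
  have hb0 : b ≠ 0 := by rintro rfl; simp_all
  -- subtracting a multiple of `a` kills the leading term of `b` without changing `W(a, b)`
  set c := b.leadingCoeff / a.leadingCoeff
  have hW : wronskian a b = wronskian a (b - C c * a) := by
    simp only [wronskian, derivative_sub, derivative_mul, derivative_C, zero_mul, zero_add]
    ring
  by_cases hr : b - C c * a = 0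
  · simp [hW, hr]
  have hlc : b.leadingCoeff = (C c * a).leadingCoeff := by
    rw [leadingCoeff_mul, leadingCoeff_C, div_mul_cancel₀ _ (leadingCoeff_ne_zero.mpr ha0)]
  have hdeg : b.degree = (C c * a).degree := by
    rw [degree_C_mul (div_ne_zero (leadingCoeff_ne_zero.mpr hb0) (leadingCoeff_ne_zero.mpr ha0)),
      degree_eq_natDegree ha0, degree_eq_natDegree hb0, hbn]
  have hrn := natDegree_lt_natDegree hr (degree_sub_lt_left hdeg hb0 hlc)
  have := natDegree_wronskian_le_add_sub_one a (b - C c * a)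
  rw [hW]
  omega

theorem two_mul_natDegree_add_natDegree_lt {g a b q : K[X]} (ha : g ∣ a) (hb : g ∣ b)
    (hg : g ≠ 0) (hq : q ≠ 0) (h : wronskian a b = g ^ 2 * q) :
    2 * g.natDegree + q.natDegree < a.natDegree + b.natDegree := by
  obtain ⟨u, rfl⟩ := ha
  obtain ⟨v, rfl⟩ := hb
  rw [wronskian_mul_mul_left] at h
  have huv : wronskian u v = q := mul_left_cancel₀ (pow_ne_zero 2 hg) h
  have hlt := natDegree_wronskian_lt_add (huv ▸ hq)
  have hu : u ≠ 0 := by rintro rfl; simp [← huv] at hq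
  have hv : v ≠ 0 := by rintro rfl; simp [← huv] at hq
  rw [natDegree_mul hg hu, natDegree_mul hg hv, ← huv]
  omega

variable [CharZero K]

theorem exists_eq_C_mul_of_wronskian_eq_zero {a b : K[X]} (ha : a ≠ 0)
    (h : wronskian a b = 0) : ∃ c, b = C c * a := by
  classical
  obtain ⟨a', b', ha', hb', hcop⟩ := extract_gcd a b
  have hg : gcd a b ≠ 0 := fun h0 ↦ ha ((gcd_eq_zero_iff a b).mp h0).1
  generalize gcd a b = g at ha' hb' hg
  rw [ha', hb', wronskian_mul_mul_left] at h
  obtain ⟨hda, hdb⟩ := ((gcd_isUnit_iff a' b').mp hcop).wronskian_eq_zero_iff.mp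
    ((mul_eq_zero.mp h).resolve_left (pow_ne_zero 2 hg))
  rw [eq_C_of_derivative_eq_zero hda] at ha'
  rw [eq_C_of_derivative_eq_zero hdb] at hb'
  have ha0 : a'.coeff 0 ≠ 0 := by rintro h0; simp [h0] at ha'; exact ha ha'
  refine ⟨b'.coeff 0 / a'.coeff 0, ?_⟩
  rw [hb', ha', ← mul_assoc, mul_comm (C _), mul_assoc, ← C_mul, div_mul_cancel₀ _ ha0]

theorem wronskian₃_ne_zero {g : Fin 3 → K[X]} (hg : LinearIndependent K g) :
    wronskian₃ (g 0) (g 1) (g 2) ≠ 0 := by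
  intro h
  have hrel : ∀ c : Fin 3 → K, C (c 0) * g 0 + C (c 1) * g 1 + C (c 2) * g 2 = 0 → ∀ i, c i = 0 :=
    fun c hc ↦ Fintype.linearIndependent_iff.mp hg c (by
      simpa [Fin.sum_univ_three, smul_eq_C_mul] using hc)
  have h0 := hg.ne_zero 0
  by_cases h01 : wronskian (g 0) (g 1) = 0
  · obtain ⟨c, hc⟩ := exists_eq_C_mul_of_wronskian_eq_zero h0 h01
    have := hrel ![c, -1, 0] (by simp [← hc]) 1
    simp at this
  -- `W(W(g₀, g₁), W(g₀, g₂)) = g₀ W(g₀, g₁, g₂) = 0`, so `W(g₀, g₂ - c g₁) = 0` for some `c`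
  obtain ⟨c, hc⟩ := exists_eq_C_mul_of_wronskian_eq_zero h01
    (by rw [wronskian_wronskian, h, mul_zero])
  obtain ⟨e, he⟩ := exists_eq_C_mul_of_wronskian_eq_zero h0
    (b := g 2 - C c * g 1) (by
      simp only [wronskian, derivative_sub, derivative_mul, derivative_C, zero_mul, zero_add]
        at hc ⊢
      linear_combination hc)
  have := hrel ![e, c, -1] (by simp [← he]) 2
  simp at this

end Field

end Polynomial

theorem Finset.gcd_mul_left_associated_of_isUnit {ι α : Type*} [CommMonoidWithZero α]
    [NormalizedGCDMonoid α] {s : Finset ι} {g : ι → α} (hg : IsUnit (s.gcd g)) (a : α) :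
    Associated (s.gcd fun i ↦ a * g i) a :=
  (Finset.gcd_mul_left' s g a).trans (associated_mul_unit_left a _ hg)

theorem Polynomial.isUnit_gcd_of_forall_exists_eval_ne_zero {ι K : Type*} [Field K]
    [IsAlgClosed K] [DecidableEq K] {s : Finset ι} {g : ι → K[X]}
    (h : ∀ z, ∃ i ∈ s, (g i).eval z ≠ 0) : IsUnit (s.gcd g) := by
  by_contra hu
  obtain ⟨z, hz⟩ := IsAlgClosed.exists_root (s.gcd g) (mt isUnit_iff_degree_eq_zero.mpr hu)
  obtain ⟨i, hi, hiz⟩ := h z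
  exact hiz (eval_eq_zero_of_dvd_of_eval_eq_zero (Finset.gcd_dvd hi) hz)

/-- The symplectic form `dz₀ ∧ dz₁ + dz₂ ∧ dz₃`: a curve `[f]` in `ℂP³` is horizontal for the
twistor fibration `ℂP³ → S⁴` iff `ω(f', f) = 0`. -/
noncomputable def contactForm {R : Type*} [CommRing R] (a b : Fin 4 → R) : R :=
  a 0 * b 1 - a 1 * b 0 + a 2 * b 3 - a 3 * b 2

/-- The index paired with `i` by `contactForm`. -/
def symplecticPartner : Fin 4 → Fin 4 := ![1, 0, 3, 2]

theorem symplecticPartner_symplecticPartner (i : Fin 4) :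
    symplecticPartner (symplecticPartner i) = i := by
  fin_cases i <;> rfl

theorem wedge1_eq_wronskian (f : Fin 4 → ℂ[X]) (i j : Fin 4) :
    wedge1 f i j = wronskian (f i) (f j) := by
  rw [wedge1, wronskian]
  ring

theorem wedge2_eq_wronskian₃ (f : Fin 4 → ℂ[X]) (l : Fin 4) :
    wedge2 f l = wronskian₃ (f (l.succAbove 0)) (f (l.succAbove 1)) (f (l.succAbove 2)) := by
  simp only [wedge2, det_fin_three, of_apply, Fin.val_zero, Fin.val_one, Fin.val_two,
    Function.iterate_zero, Function.iterate_succ, Function.comp_apply, id_eq,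
    wronskian₃, wronskian]
  ring

/-- `ω(f', f'')`, the common factor of the minors of `f ∧ f′ ∧ f″` for horizontal `f`. -/
noncomputable def contactDeriv (f : Fin 4 → ℂ[X]) : ℂ[X] :=
  contactForm (fun i ↦ derivative (f i)) (fun i ↦ derivative (derivative (f i)))

theorem maxDeg1_le {f : Fin 4 → ℂ[X]} {d : ℕ} (hdeg : ∀ i, (f i).natDegree ≤ d) :
    maxDeg1 f ≤ 2 * d - 2 :=
  Finset.sup_le fun ij _ ↦ by
    rw [wedge1_eq_wronskian]
    exact natDegree_wronskian_le_of_natDegree_le (hdeg ij.1) (hdeg ij.2)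

theorem exists_wronskian₃_eq_wedge2 (f : Fin 4 → ℂ[X]) (i : Fin 4) :
    ∃ j k, wronskian₃ (f i) (f j) (f k) = wedge2 f (symplecticPartner i) := by
  fin_cases i
  · exact ⟨2, 3, wedge2_eq_wronskian₃ f 1 |>.symm⟩
  · exact ⟨2, 3, wedge2_eq_wronskian₃ f 0 |>.symm⟩
  · exact ⟨0, 1, (wronskian₃_rotate _ _ _).trans (wedge2_eq_wronskian₃ f 3).symm⟩
  · exact ⟨0, 1, (wronskian₃_rotate _ _ _).trans (wedge2_eq_wronskian₃ f 2).symm⟩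

section Horizontal

variable {f : Fin 4 → ℂ[X]} (hf : contactForm (fun i ↦ derivative (f i)) f = 0)
include hf

theorem wedge2_eq_contactForm_mul (l : Fin 4) :
    wedge2 f l = contactDeriv f * f (symplecticPartner l) := by
  have hf' := congrArg derivative hf
  simp only [contactDeriv, contactForm, derivative_add, derivative_sub, derivative_mul,
    derivative_zero] at hf hf' ⊢
  rw [wedge2_eq_wronskian₃]
  -- `W(f_a, f_b, f_c) - ω(f', f'') f_σ = f_σ' ω(f', f)' - f_σ'' ω(f', f)`, `σ` the partner of `l`
  fin_cases l
  · change wronskian₃ (f 1) (f 2) (f 3) = _ * f 1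
    simp only [wronskian₃, wronskian]
    linear_combination -derivative (derivative (f 1)) * hf + derivative (f 1) * hf'
  · change wronskian₃ (f 0) (f 2) (f 3) = _ * f 0
    simp only [wronskian₃, wronskian]
    linear_combination -derivative (derivative (f 0)) * hf + derivative (f 0) * hf'
  · change wronskian₃ (f 0) (f 1) (f 3) = _ * f 3
    simp only [wronskian₃, wronskian]
    linear_combination -derivative (derivative (f 3)) * hf + derivative (f 3) * hf'
  · change wronskian₃ (f 0) (f 1) (f 2) = _ * f 2
    simp only [wronskian₃, wronskian]
    linear_combination -derivative (derivative (f 2)) * hf + derivative (f 2) * hf'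

theorem contactDeriv_ne_zero (hfull : LinearIndependent ℂ f) : contactDeriv f ≠ 0 := by
  have h := wronskian₃_ne_zero (hfull.comp (Fin.succAbove 0) Fin.succAbove_right_injective)
  rw [Function.comp_apply, Function.comp_apply, Function.comp_apply, ← wedge2_eq_wronskian₃,
    wedge2_eq_contactForm_mul hf] at h
  exact left_ne_zero_of_mul h

theorem exists_wronskian_wedge1_eq (i : Fin 4) :
    ∃ j k, wronskian (wedge1 f i j) (wedge1 f i k) = contactDeriv f * f i ^ 2 := by
  obtain ⟨j, k, hjk⟩ := exists_wronskian₃_eq_wedge2 f i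
  refine ⟨j, k, ?_⟩
  rw [wedge1_eq_wronskian, wedge1_eq_wronskian, wronskian_wronskian, hjk,
    wedge2_eq_contactForm_mul hf, symplecticPartner_symplecticPartner]
  ring

theorem ord2Fin_eq_natDegree_contactDeriv (hnocommon : ∀ z : ℂ, ∃ i, (f i).eval z ≠ 0) :
    ord2Fin f = (contactDeriv f).natDegree := by
  have hunit : IsUnit (Finset.univ.gcd fun l ↦ f (symplecticPartner l)) :=
    isUnit_gcd_of_forall_exists_eval_ne_zero fun z ↦
      let ⟨i, hi⟩ := hnocommon z
      ⟨symplecticPartner i, Finset.mem_univ _, by rwa [symplecticPartner_symplecticPartner]⟩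
  simp only [ord2Fin, wedge2_eq_contactForm_mul hf]
  exact natDegree_eq_of_degree_eq (degree_eq_degree_of_associated
    (Finset.gcd_mul_left_associated_of_isUnit hunit _))

theorem maxDeg2_eq {d : ℕ} (hh : contactDeriv f ≠ 0) (hdeg : ∀ i, (f i).natDegree ≤ d)
    (htop : ∃ i, (f i).natDegree = d ∧ f i ≠ 0) :
    maxDeg2 f = (contactDeriv f).natDegree + d := by
  obtain ⟨i, hid, hi⟩ := htop
  refine le_antisymm (Finset.sup_le fun l _ ↦ ?_) (Finset.le_sup_of_le (Finset.mem_univ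
    (symplecticPartner i)) ?_)
  · rw [wedge2_eq_contactForm_mul hf]
    exact natDegree_mul_le.trans (Nat.add_le_add_left (hdeg _) _)
  · rw [wedge2_eq_contactForm_mul hf, symplecticPartner_symplecticPartner, natDegree_mul hh hi,
      hid]

theorem add_ord1Fin_lt_maxDeg1 {d : ℕ} (hnocommon : ∀ z : ℂ, ∃ i, (f i).eval z ≠ 0)
    (hfull : LinearIndependent ℂ f) (htop : ∃ i, (f i).natDegree = d ∧ f i ≠ 0) :
    d + ord1Fin f < maxDeg1 f := by
  set g := Finset.univ.gcd fun ij : Fin 4 × Fin 4 ↦ wedge1 f ij.1 ij.2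
  have hg (i j : Fin 4) : g ∣ wedge1 f i j :=
    Finset.gcd_dvd (f := fun ij : Fin 4 × Fin 4 ↦ wedge1 f ij.1 ij.2) (b := (i, j))
      (Finset.mem_univ _)
  have hunit : IsUnit (Finset.univ.gcd fun i ↦ f i ^ 2) :=
    isUnit_gcd_of_forall_exists_eval_ne_zero fun z ↦
      let ⟨i, hi⟩ := hnocommon z
      ⟨i, Finset.mem_univ _, by simpa using hi⟩
  -- `g² ∣ W(wedge1 f i j, wedge1 f i k) = ω(f', f'') f_i²` for every `i`, and the `f_i` are coprime
  obtain ⟨q, hq⟩ : g ^ 2 ∣ contactDeriv f := by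
    refine ((Finset.dvd_gcd fun i _ ↦ ?_).trans
      (Finset.gcd_mul_left_associated_of_isUnit hunit _).dvd)
    obtain ⟨j, k, hjk⟩ := exists_wronskian_wedge1_eq hf i
    exact hjk ▸ sq_dvd_wronskian (hg i j) (hg i k)
  have hh := contactDeriv_ne_zero hf hfull
  have hg0 : g ≠ 0 := fun h0 ↦ hh (by simp [hq, h0])
  have hq0 : q ≠ 0 := fun h0 ↦ hh (by simp [hq, h0])
  obtain ⟨i, hid, hi⟩ := htop
  obtain ⟨j, k, hjk⟩ := exists_wronskian_wedge1_eq hf i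
  have hlt := two_mul_natDegree_add_natDegree_lt (hg i j) (hg i k) hg0
    (mul_ne_zero hq0 (pow_ne_zero 2 hi)) (by rw [hjk, hq]; ring)
  rw [natDegree_mul hq0 (pow_ne_zero 2 hi), natDegree_pow, hid] at hlt
  have hle (j : Fin 4) : (wedge1 f i j).natDegree ≤ maxDeg1 f :=
    Finset.le_sup (f := fun ij : Fin 4 × Fin 4 ↦ (wedge1 f ij.1 ij.2).natDegree) (b := (i, j))
      (Finset.mem_univ _)
  have := hle j
  have := hle k
  change d + g.natDegree < maxDeg1 f
  omega

end Horizontal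

/-- For a linearly full horizontal holomorphic curve of degree `d` in `ℂP³`:
`2r₀ + r₁ = 2d − 6`; in particular `d ≥ 3`, and a curve of degree 3 has no higher
singularities. -/
theorem total_ramification_horizontal (f : Fin 4 → Polynomial ℂ) (d : ℕ)
    (hdeg : ∀ i, (f i).natDegree ≤ d)
    (htop : ∃ i, (f i).natDegree = d ∧ f i ≠ 0)
    (hnocommon : ∀ z : ℂ, ∃ i, (f i).eval z ≠ 0)
    (hfull : LinearIndependent ℂ f)
    (hhoriz : derivative (f 0) * f 1 - f 0 * derivative (f 1) +
      derivative (f 2) * f 3 - f 2 * derivative (f 3) = 0) :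
    2 * r0 f d + r1 f d = 2 * (d : ℤ) - 6 ∧ 3 ≤ d ∧
      (d = 3 → r0 f d = 0 ∧ r1 f d = 0) := by
  have hf : contactForm (fun i ↦ derivative (f i)) f = 0 := by
    rw [← hhoriz, contactForm]
    ring
  have h1 := maxDeg1_le hdeg
  have h2 := add_ord1Fin_lt_maxDeg1 hf hnocommon hfull htop
  have h3 := ord2Fin_eq_natDegree_contactDeriv hf hnocommon
  have h4 := maxDeg2_eq hf (contactDeriv_ne_zero hf hfull) hdeg htop
  simp only [r1, r0, h3, h4]
  omega
end

section
/- The curve f(z) = (1+az, −z⁴, √2·z(1+(3/2)az), √2·z³) with a ∈ ℝ satisfies the horizontality condition f₁′f₂ − f₁f₂′ + f₃′f₄ − f₃f₄′ = 0 identically, and its higher-singularity polynomial f₁″f₂′ − f₁′f₂″ + f₃″f₄′ − f₃′f₄″ is a nonzero constant multiple of z(az+2). -/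
/-!
The form `f₁′f₂ − f₁f₂′ + f₃′f₄ − f₃f₄′` is the sum of Wronskians `W(f₂, f₁) + W(f₄, f₃)`, and
the higher-singularity polynomial is the same form evaluated on `f′`. The common factor `√2` of
`f₃` and `f₄` leaves each Wronskian as `√2² = 2` times that of the cofactors, after which both
identities are polynomial computations that only need `2 · (3a/2) = 3a`.
-/

open Polynomial

namespace Polynomial

variable {R : Type*} [CommRing R]

theorem wronskian_C_mul_C_mul (s : R) (p q : R[X]) :
    wronskian (C s * p) (C s * q) = C (s * s) * wronskian p q := by
  simp only [wronskian, derivative_C_mul, C_mul]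
  ring

end Polynomial

section

variable {R : Type*} [CommRing R]

theorem horizontalityForm_eq_wronskian (f : Fin 4 → R[X]) :
    horizontalityForm f = wronskian (f 1) (f 0) + wronskian (f 3) (f 2) := by
  simp only [horizontalityForm, wronskian]
  ring

/-- `Ψ̃⁴_a`, with `s` in place of `√2` and `b` in place of `3a/2`. -/
noncomputable def psi4 (a b s : R) : Fin 4 → R[X] :=
  ![1 + C a * X, -(X ^ 4), C s * X * (1 + C b * X), C s * X ^ 3]

variable {a b s : R}

theorem horizontalityForm_psi4 (hs : s * s = 2) (hb : 2 * b = 3 * a) :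
    horizontalityForm (psi4 a b s) = 0 := by
  have hb' : 2 * C b = 3 * C a := by simpa [C_ofNat] using congrArg C hb
  rw [horizontalityForm_eq_wronskian]
  simp only [psi4, Matrix.cons_val]
  rw [mul_assoc, wronskian_C_mul_C_mul, hs]
  simp only [wronskian, derivative_mul, derivative_neg, derivative_one, derivative_C,
    derivative_X, derivative_X_pow_succ, Nat.cast_ofNat, map_add, map_one, C_ofNat]
  linear_combination -X ^ 4 * hb'

theorem horizontalityForm_derivative_psi4 (hs : s * s = 2) (hb : 2 * b = 3 * a) :
    horizontalityForm (fun i => derivative (psi4 a b s i)) = C (-6) * (X * (C a * X + C 2)) := by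
  have hb' : 2 * C b = 3 * C a := by simpa [C_ofNat] using congrArg C hb
  rw [horizontalityForm_eq_wronskian]
  simp only [psi4, Matrix.cons_val, mul_assoc, derivative_C_mul]
  rw [wronskian_C_mul_C_mul, hs]
  simp only [wronskian, derivative_mul, derivative_one, derivative_C, derivative_X,
    derivative_X_pow_succ, derivative_ofNat, derivative_zero, Nat.cast_ofNat, Nat.cast_one,
    map_add, map_one, map_neg, C_ofNat]
  linear_combination -6 * X ^ 2 * hb'

end

/-- The canonical degree-4 family `Ψ̃⁴_a(z) = (1+az, −z⁴, √2·z(1+(3/2)az), √2·z³)`,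
`a ∈ ℝ`, is horizontal, and its higher-singularity polynomial
`f₁″f₂′ − f₁′f₂″ + f₃″f₄′ − f₃′f₄″` is a nonzero constant multiple of `z(az+2)`. -/
theorem Psi4_horizontal_singularities (a : ℝ) :
    letI s2 : ℂ := ((Real.sqrt 2 : ℝ) : ℂ)
    letI f : Fin 4 → Polynomial ℂ :=
      ![1 + C (a : ℂ) * X,
        -(X ^ 4),
        C s2 * X * (1 + C ((3 / 2 : ℝ) * a : ℂ) * X),
        C s2 * X ^ 3]
    (derivative (f 0) * f 1 - f 0 * derivative (f 1) +
      derivative (f 2) * f 3 - f 2 * derivative (f 3) = 0) ∧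
    (∃ c : ℂ, c ≠ 0 ∧
      derivative (derivative (f 0)) * derivative (f 1) -
        derivative (f 0) * derivative (derivative (f 1)) +
        derivative (derivative (f 2)) * derivative (f 3) -
        derivative (f 2) * derivative (derivative (f 3)) =
      C c * (X * (C (a : ℂ) * X + C 2))) := by
  have hs : ((Real.sqrt 2 : ℝ) : ℂ) * ((Real.sqrt 2 : ℝ) : ℂ) = 2 := by
    exact_mod_cast Real.mul_self_sqrt zero_le_two
  have hb : (2 : ℂ) * ((3 / 2 : ℝ) * a : ℂ) = 3 * a := by
    push_cast
    ring
  exact ⟨horizontalityForm_psi4 hs hb, -6, by norm_num, horizontalityForm_derivative_psi4 hs hb⟩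
end

section
/- For positive integers k₁, k₂ with 2k₁ + k₂ = d, the curve f(z) = (1, k₂·z^(2k₁+k₂), −(2k₁+k₂)·z^(k₁), z^(k₁+k₂)) satisfies the horizontality condition f₁′f₂ − f₁f₂′ + f₃′f₄ − f₃f₄′ = 0 identically, and the zeros of its higher-singularity polynomial f₁″f₂′ − f₁′f₂″ + f₃″f₄′ − f₃′f₄″ in ℂ∖{0} are empty (all higher singularities occur at 0 or ∞). -/
/-!
Both expressions are sums of two Wronskians of monomials, and
`W(a Xᵐ, b Xⁿ) = ab(n - m) X^(m+n-1)`. For `f` the two Wronskians are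
`±k₂(2k₁+k₂) X^(2k₁+k₂-1)` and cancel. For `f′` the first Wronskian vanishes since
`f₀′ = 0`, and the second is `(2k₁+k₂) k₁ (k₁+k₂) k₂ X^(2k₁+k₂-3)`, nonzero away from `0`.
-/

open Polynomial

namespace Polynomial

variable {R : Type*} [CommRing R]

theorem wronskian_C_mul_X_pow (a b : R) (m n : ℕ) :
    wronskian (C a * X ^ m) (C b * X ^ n) = C (a * b * (n - m)) * X ^ (m + n - 1) := by
  rw [wronskian, derivative_C_mul_X_pow, derivative_C_mul_X_pow]
  rcases m with _ | m <;> rcases n with _ | n <;>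
    simp only [map_mul, map_sub, map_add, map_one, map_zero, Nat.cast_add, Nat.cast_one,
      Nat.cast_zero, Nat.add_sub_cancel, zero_add, add_zero, Nat.zero_sub, pow_zero]
  · ring
  · ring
  · ring
  · rw [show m + 1 + (n + 1) - 1 = m + n + 1 by omega]; ring

theorem derivative_mul_sub_add_eq_neg_wronskian (a b c d : R[X]) :
    derivative a * b - a * derivative b + derivative c * d - c * derivative d =
      -(wronskian a b + wronskian c d) := by
  simp only [wronskian]; ring

end Polynomial

theorem bolton_woodward_canonical_general (k₁ k₂ : ℕ) (hk₁ : 0 < k₁) (hk₂ : 0 < k₂) :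
    letI f : Fin 4 → Polynomial ℂ :=
      ![1,
        C (k₂ : ℂ) * X ^ (2 * k₁ + k₂),
        -(C ((2 * k₁ + k₂ : ℕ) : ℂ) * X ^ k₁),
        X ^ (k₁ + k₂)]
    (derivative (f 0) * f 1 - f 0 * derivative (f 1) +
      derivative (f 2) * f 3 - f 2 * derivative (f 3) = 0) ∧
    (∀ z : ℂ, z ≠ 0 →
      (derivative (derivative (f 0)) * derivative (f 1) -
        derivative (f 0) * derivative (derivative (f 1)) +
        derivative (derivative (f 2)) * derivative (f 3) -
        derivative (f 2) * derivative (derivative (f 3))).eval z ≠ 0) := by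
  have hf : (![1, C (k₂ : ℂ) * X ^ (2 * k₁ + k₂), -(C ((2 * k₁ + k₂ : ℕ) : ℂ) * X ^ k₁),
      X ^ (k₁ + k₂)] : Fin 4 → ℂ[X]) =
      ![C 1 * X ^ 0, C (k₂ : ℂ) * X ^ (2 * k₁ + k₂), C (-((2 * k₁ + k₂ : ℕ) : ℂ)) * X ^ k₁,
        C 1 * X ^ (k₁ + k₂)] := by
    simp only [map_one, one_mul, pow_zero, map_neg, neg_mul]
  rw [hf]
  simp only [Matrix.cons_val_zero, Matrix.cons_val_one, Matrix.cons_val_two,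
    Matrix.cons_val_three, Matrix.head_cons, Matrix.tail_cons]
  refine ⟨?_, fun z hz => ?_⟩ <;> rw [derivative_mul_sub_add_eq_neg_wronskian]
  · rw [wronskian_C_mul_X_pow, wronskian_C_mul_X_pow,
      show k₁ + (k₁ + k₂) - 1 = 0 + (2 * k₁ + k₂) - 1 by omega, neg_eq_zero, ← add_mul,
      ← C_add]
    convert zero_mul (X ^ _ : ℂ[X])
    rw [C_eq_zero]
    push_cast
    ring
  · have hsub : ((k₁ + k₂ - 1 : ℕ) : ℂ) - ((k₁ - 1 : ℕ) : ℂ) = k₂ := by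
      rw [Nat.cast_sub (by omega), Nat.cast_sub (by omega)]
      push_cast
      ring
    simp only [derivative_C_mul_X_pow, wronskian_C_mul_X_pow, Nat.cast_zero, mul_zero, zero_mul,
      map_zero, wronskian_zero_left, zero_add, hsub, eval_neg, eval_C_mul, eval_pow, eval_X,
      neg_ne_zero]
    refine mul_ne_zero ?_ (pow_ne_zero _ hz)
    simp only [one_mul, neg_mul, neg_ne_zero, mul_ne_zero_iff, Nat.cast_ne_zero]
    omega

/-- The Bolton–Woodward canonical curve
`f(z) = (1, k₂z^(2k₁+k₂), −(2k₁+k₂)z^(k₁), z^(k₁+k₂))` with `k₁, k₂ > 0` and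
`2k₁ + k₂ = d` is horizontal, and its higher-singularity polynomial has no zeros in
`ℂ ∖ {0}`: all higher singularities occur at `0` or `∞`. -/
theorem bolton_woodward_canonical (k₁ k₂ d : ℕ) (hk₁ : 0 < k₁) (hk₂ : 0 < k₂)
    (hd : 2 * k₁ + k₂ = d) :
    letI f : Fin 4 → Polynomial ℂ :=
      ![1,
        C (k₂ : ℂ) * X ^ (2 * k₁ + k₂),
        -(C ((2 * k₁ + k₂ : ℕ) : ℂ) * X ^ k₁),
        X ^ (k₁ + k₂)]
    (derivative (f 0) * f 1 - f 0 * derivative (f 1) +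
      derivative (f 2) * f 3 - f 2 * derivative (f 3) = 0) ∧
    (∀ z : ℂ, z ≠ 0 →
      (derivative (derivative (f 0)) * derivative (f 1) -
        derivative (f 0) * derivative (derivative (f 1)) +
        derivative (derivative (f 2)) * derivative (f 3) -
        derivative (f 2) * derivative (derivative (f 3))).eval z ≠ 0) :=
  bolton_woodward_canonical_general k₁ k₂ hk₁ hk₂
end
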